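/- The corona G = H ∘ K_1 (every vertex of H gets a pendant leaf) has two disjoint maximum independent sets if and only if H is bipartite. -/

import Mathlib

/-! Projecting `V ⊕ V` onto `V` is injective on an independent set of `H ∘ K₁` (since `u` and
`u*` are adjacent), so `α(H ∘ K₁) = |V|` and a maximum independent set contains, for every `u`,
exactly one of `u`, `u*`. If `S₁`, `S₂` are disjoint maximum independent sets, every `u` missing
from `S₁` has `u* ∈ S₁`, hence `u* ∉ S₂` and `u ∈ S₂`: so the `H`-parts of `S₁` and `S₂` cover `V`
and are independent in `H`. Conversely a bipartition `{X, Y}` gives `X ∪ Y*` and `Y ∪ X*`. -/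

open Finset

/-- A finset of vertices is independent: no two of its members are adjacent. -/
def IndepSet {V : Type*} (G : SimpleGraph V) (A : Finset V) : Prop :=
  ∀ u ∈ A, ∀ v ∈ A, ¬ G.Adj u v

open scoped Classical in
/-- Maximum size of an independent set contained in `s` (independence number of `G[s]`). -/
noncomputable def alphaOn {V : Type*} [Fintype V] (G : SimpleGraph V) (s : Finset V) : ℕ :=
  ((s.powerset).filter (fun A => IndepSet G A)).sup Finset.card

/-- The independence number of `G`. -/
noncomputable def alpha {V : Type*} [Fintype V] (G : SimpleGraph V) : ℕ :=
  alphaOn G Finset.univ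

/-- The induced subgraph `G[s]` is well-covered: every maximal independent subset of `s`
has maximum cardinality. -/
def WellCoveredOn {V : Type*} [Fintype V] (G : SimpleGraph V) (s : Finset V) : Prop :=
  ∀ A ⊆ s, IndepSet G A →
    (∀ B ⊆ s, IndepSet G B → A ⊆ B → A = B) → A.card = alphaOn G s

/-- `G` is well-covered. -/
def WellCovered {V : Type*} [Fintype V] (G : SimpleGraph V) : Prop :=
  WellCoveredOn G Finset.univ

open scoped Classical in
/-- The open neighborhood `N(A)`: vertices having a neighbor in `A`. -/
noncomputable def nbhd {V : Type*} [Fintype V] (G : SimpleGraph V) (A : Finset V) : Finset V :=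
  Finset.univ.filter (fun v => ∃ u ∈ A, G.Adj u v)

/-- The closed neighborhood `N[A] = A ∪ N(A)`. -/
noncomputable def closedNbhd {V : Type*} [Fintype V] [DecidableEq V] (G : SimpleGraph V) (A : Finset V) :
    Finset V :=
  A ∪ nbhd G A

/-- The induced subgraph `G[s]` is in class `W₂`: every two disjoint independent subsets of `s`
extend to two disjoint maximum independent subsets of `s`. -/
def W2On {V : Type*} [Fintype V] (G : SimpleGraph V) (s : Finset V) : Prop :=
  ∀ A ⊆ s, ∀ B ⊆ s, IndepSet G A → IndepSet G B → Disjoint A B →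
    ∃ S₁ ⊆ s, ∃ S₂ ⊆ s, IndepSet G S₁ ∧ IndepSet G S₂ ∧
      S₁.card = alphaOn G s ∧ S₂.card = alphaOn G s ∧ Disjoint S₁ S₂ ∧ A ⊆ S₁ ∧ B ⊆ S₂

/-- `G` belongs to class `W₂`. -/
def W2 {V : Type*} [Fintype V] (G : SimpleGraph V) : Prop :=
  W2On G Finset.univ

/-- The corona H ∘ K₁: each vertex u of H gets a pendant leaf (modeled on V ⊕ V, with
Sum.inr u the pendant vertex attached to u). -/
def CoronaK1 {V : Type*} (H : SimpleGraph V) : SimpleGraph (V ⊕ V) :=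
  SimpleGraph.fromRel (fun a b =>
    match a, b with
    | Sum.inl u, Sum.inl w => H.Adj u w
    | Sum.inl u, Sum.inr w => u = w
    | Sum.inr _, _ => False)

lemma disjoint_disjSum {α β : Type*} {s s' : Finset α} {t t' : Finset β} (hs : Disjoint s s')
    (ht : Disjoint t t') : Disjoint (s.disjSum t) (s'.disjSum t') := by
  rw [disjoint_left]
  rintro (a | b) h h'
  · exact disjoint_left.1 hs (inl_mem_disjSum.1 h) (inl_mem_disjSum.1 h')
  · exact disjoint_left.1 ht (inr_mem_disjSum.1 h) (inr_mem_disjSum.1 h')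

section IndepSet

variable {V : Type*} {G : SimpleGraph V}

lemma IndepSet.mono {A B : Finset V} (hB : IndepSet G B) (hAB : A ⊆ B) : IndepSet G A :=
  fun u hu v hv => hB u (hAB hu) v (hAB hv)

lemma IndepSet.card_le_alpha [Fintype V] {A : Finset V} (hA : IndepSet G A) :
    A.card ≤ alpha G := by
  classical
  exact Finset.le_sup (f := Finset.card) (mem_filter.2 ⟨mem_powerset.2 (subset_univ A), hA⟩)

lemma alpha_le [Fintype V] {n : ℕ} (h : ∀ A : Finset V, IndepSet G A → A.card ≤ n) :
    alpha G ≤ n := by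
  classical
  exact Finset.sup_le fun A hA => h A (mem_filter.1 hA).2

end IndepSet

section CoronaK1

variable {V : Type*} {H : SimpleGraph V}

@[simp]
lemma coronaK1_adj_inl_inl {u w : V} :
    (CoronaK1 H).Adj (Sum.inl u) (Sum.inl w) ↔ H.Adj u w := by
  simp only [CoronaK1, SimpleGraph.fromRel_adj, ne_eq, Sum.inl.injEq]
  exact ⟨fun ⟨_, h⟩ => h.elim id H.adj_symm, fun h => ⟨H.ne_of_adj h, Or.inl h⟩⟩

@[simp]
lemma coronaK1_adj_inl_inr {u w : V} : (CoronaK1 H).Adj (Sum.inl u) (Sum.inr w) ↔ u = w := by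
  simp [CoronaK1]

@[simp]
lemma coronaK1_not_adj_inr_inr {u w : V} : ¬ (CoronaK1 H).Adj (Sum.inr u) (Sum.inr w) := by
  simp [CoronaK1]

lemma IndepSet.toLeft_of_coronaK1 {S : Finset (V ⊕ V)} (hS : IndepSet (CoronaK1 H) S) :
    IndepSet H S.toLeft :=
  fun _ hu _ hw hadj =>
    hS _ (mem_toLeft.1 hu) _ (mem_toLeft.1 hw) (coronaK1_adj_inl_inl.2 hadj)

lemma IndepSet.disjoint_toLeft_toRight {S : Finset (V ⊕ V)} (hS : IndepSet (CoronaK1 H) S) :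
    Disjoint S.toLeft S.toRight :=
  disjoint_left.2 fun _ hl hr =>
    hS _ (mem_toLeft.1 hl) _ (mem_toRight.1 hr) (coronaK1_adj_inl_inr.2 rfl)

variable [Fintype V]

lemma IndepSet.card_le_of_coronaK1 {S : Finset (V ⊕ V)} (hS : IndepSet (CoronaK1 H) S) :
    S.card ≤ Fintype.card V := by
  classical
  rw [← card_toLeft_add_card_toRight, ← card_union_of_disjoint hS.disjoint_toLeft_toRight]
  exact card_le_univ _

lemma IndepSet.inl_mem_or_inr_mem_of_coronaK1 {S : Finset (V ⊕ V)}
    (hS : IndepSet (CoronaK1 H) S) (hcard : S.card = Fintype.card V) (v : V) :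
    Sum.inl v ∈ S ∨ Sum.inr v ∈ S := by
  classical
  have hcover : S.toLeft ∪ S.toRight = univ := eq_univ_of_card _ <| by
    rw [card_union_of_disjoint hS.disjoint_toLeft_toRight, card_toLeft_add_card_toRight, hcard]
  simpa using hcover.ge (mem_univ v)

variable [DecidableEq V]

lemma indepSet_disjSum_compl {X : Finset V} (hX : IndepSet H X) :
    IndepSet (CoronaK1 H) (X.disjSum Xᶜ) := by
  rintro (u | u) hu (w | w) hw hadj <;>
    simp only [inl_mem_disjSum, inr_mem_disjSum, mem_compl] at hu hw
  · exact hX u hu w hw (coronaK1_adj_inl_inl.1 hadj)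
  · exact hw (coronaK1_adj_inl_inr.1 hadj ▸ hu)
  · exact hu (coronaK1_adj_inl_inr.1 hadj.symm ▸ hw)
  · exact coronaK1_not_adj_inr_inr hadj

lemma card_disjSum_compl (X : Finset V) : (X.disjSum Xᶜ).card = Fintype.card V := by
  rw [card_disjSum, card_add_card_compl]

lemma alpha_coronaK1 : alpha (CoronaK1 H) = Fintype.card V :=
  le_antisymm (alpha_le fun _ hS => hS.card_le_of_coronaK1) <| by
    simpa only [card_disjSum_compl] using
      (indepSet_disjSum_compl (H := H) (X := ∅) (by simp [IndepSet])).card_le_alpha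

end CoronaK1

/-- H ∘ K₁ has two disjoint maximum independent sets iff H is bipartite. -/
theorem stmt19 {V : Type*} [Fintype V] [DecidableEq V] (H : SimpleGraph V) :
    (∃ S₁ S₂ : Finset (V ⊕ V), IndepSet (CoronaK1 H) S₁ ∧ IndepSet (CoronaK1 H) S₂ ∧
      S₁.card = alpha (CoronaK1 H) ∧ S₂.card = alpha (CoronaK1 H) ∧ Disjoint S₁ S₂) ↔
    (∃ X : Finset V, IndepSet H X ∧ IndepSet H Xᶜ) := by
  rw [alpha_coronaK1]
  constructor
  · rintro ⟨S₁, S₂, h₁, h₂, hc₁, hc₂, hd⟩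
    refine ⟨S₁.toLeft, h₁.toLeft_of_coronaK1, h₂.toLeft_of_coronaK1.mono ?_⟩
    intro v hv
    rw [mem_compl, mem_toLeft] at hv
    have hv₁ : Sum.inr v ∈ S₁ := (h₁.inl_mem_or_inr_mem_of_coronaK1 hc₁ v).resolve_left hv
    exact mem_toLeft.2 <|
      (h₂.inl_mem_or_inr_mem_of_coronaK1 hc₂ v).resolve_right (disjoint_left.1 hd hv₁)
  · rintro ⟨X, hX, hXc⟩
    exact ⟨_, _, indepSet_disjSum_compl hX, indepSet_disjSum_compl hXc, card_disjSum_compl X,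
      card_disjSum_compl Xᶜ, disjoint_disjSum disjoint_compl_right disjoint_compl_right⟩
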